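/- arXiv:2402.12373 — 2 statements merged into one kernel-verified Lean document; each statement's English description precedes it below -/
import Mathlib

section
/- Let tr be a trace over Σ with |tr| ≤ L, let φ₁, φ₂ be LTL formulae, and let cs1₀, cs2₀ be the characteristic sequences of φ₁ and φ₂ over tr. Define iteratively, for all j ∈ ℕ: cs1_{i+1}(j) = cs1_i(j) AND cs1_i(j + 2^i), and cs2_{i+1}(j) = cs2_i(j) OR (cs1_i(j) AND cs2_i(j + 2^i)). Then for every i with 2^i ≥ L and every j ∈ ℕ: cs2_i(j) = true if and only if tr, j ⊨ φ₁ U φ₂; i.e., after ⌈log₂ L⌉ iterations the exponential-propagation algorithm computes the characteristic sequence of φ₁ U φ₂. -/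
/-- LTL formulae over an alphabet `α`. -/
inductive LTL (α : Type) : Type where
  | atom : α → LTL α
  | neg : LTL α → LTL α
  | conj : LTL α → LTL α → LTL α
  | disj : LTL α → LTL α → LTL α
  | next : LTL α → LTL α
  | ev : LTL α → LTL α
  | alw : LTL α → LTL α
  | untl : LTL α → LTL α → LTL α

/-- Finite-trace satisfaction `tr, i ⊨ φ`: false whenever `i ≥ |tr|`,
and for `i < |tr|` the standard clauses. A trace is a finite sequence
(list) of sets of characters. -/
def Sat {α : Type} (tr : List (Set α)) : LTL α → ℕ → Prop
  | .atom p, i => i < tr.length ∧ p ∈ tr.getD i ∅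
  | .neg φ, i => i < tr.length ∧ ¬ Sat tr φ i
  | .conj φ ψ, i => Sat tr φ i ∧ Sat tr ψ i
  | .disj φ ψ, i => i < tr.length ∧ (Sat tr φ i ∨ Sat tr ψ i)
  | .next φ, i => Sat tr φ (i + 1)
  | .ev φ, i => ∃ j, i ≤ j ∧ j < tr.length ∧ Sat tr φ j
  | .alw φ, i => i < tr.length ∧ ∀ j, i ≤ j → j < tr.length → Sat tr φ j
  | .untl φ ψ, i =>
      ∃ j, i ≤ j ∧ j < tr.length ∧ Sat tr ψ j ∧ ∀ k, i ≤ k → k < j → Sat tr φ k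

theorem sat_lt {α : Type} (tr : List (Set α)) :
    ∀ (φ : LTL α) (i : ℕ), Sat tr φ i → i < tr.length
  | .atom _, _, h => h.1
  | .neg _, _, h => h.1
  | .conj φ _, i, h => sat_lt tr φ i h.1
  | .disj _ _, _, h => h.1
  | .next φ, i, h => Nat.lt_of_succ_lt (sat_lt tr φ (i + 1) h)
  | .ev _, _, ⟨_, h1, h2, _⟩ => lt_of_le_of_lt h1 h2
  | .alw _, _, h => h.1
  | .untl _ _, _, ⟨_, h1, h2, _⟩ => lt_of_le_of_lt h1 h2

/-- Exponential propagation computes the characteristic sequence of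
`φ₁ U φ₂`: if `|tr| ≤ L`, `cs1 0`, `cs2 0` are the characteristic sequences
of `φ₁`, `φ₂` over `tr`, `cs1 (i+1) j = cs1 i j && cs1 i (j + 2^i)` and
`cs2 (i+1) j = cs2 i j || (cs1 i j && cs2 i (j + 2^i))`, then for every `i`
with `2^i ≥ L` and every `j`, `cs2 i j = true` iff `tr, j ⊨ φ₁ U φ₂`. -/
theorem stmt_4 {α : Type} [Fintype α] [Nonempty α]
    (L : ℕ) (tr : List (Set α)) (hL : tr.length ≤ L)
    (φ₁ φ₂ : LTL α) (cs1 cs2 : ℕ → ℕ → Bool)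
    (h10 : ∀ j, cs1 0 j = true ↔ Sat tr φ₁ j)
    (h20 : ∀ j, cs2 0 j = true ↔ Sat tr φ₂ j)
    (hstep1 : ∀ i j, cs1 (i + 1) j = (cs1 i j && cs1 i (j + 2 ^ i)))
    (hstep2 : ∀ i j, cs2 (i + 1) j = (cs2 i j || (cs1 i j && cs2 i (j + 2 ^ i)))) :
    ∀ i, L ≤ 2 ^ i → ∀ j, (cs2 i j = true ↔ Sat tr (LTL.untl φ₁ φ₂) j) := by
  have hA : ∀ i j, cs1 i j = true ↔ ∀ k, j ≤ k → k < j + 2 ^ i → Sat tr φ₁ k := by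
    intro i
    induction i with
    | zero =>
      intro j
      rw [h10 j]
      constructor
      · intro h k hk1 hk2
        have : k = j := by omega
        rwa [this]
      · intro h
        exact h j le_rfl (by omega)
    | succ i ih =>
      intro j
      have he : 2 ^ (i + 1) = 2 ^ i + 2 ^ i := by rw [pow_succ]; ring
      rw [hstep1, Bool.and_eq_true, ih, ih]
      constructor
      · rintro ⟨h1, h2⟩ k hk1 hk2
        by_cases hc : k < j + 2 ^ i
        · exact h1 k hk1 hc
        · exact h2 k (by omega) (by omega)
      · intro h
        exact ⟨fun k hk1 hk2 => h k hk1 (by omega),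
               fun k hk1 hk2 => h k (by omega) (by omega)⟩
  have hB : ∀ i j, cs2 i j = true ↔
      ∃ m, j ≤ m ∧ m < j + 2 ^ i ∧ Sat tr φ₂ m ∧ ∀ k, j ≤ k → k < m → Sat tr φ₁ k := by
    intro i
    induction i with
    | zero =>
      intro j
      rw [h20 j]
      constructor
      · intro h
        exact ⟨j, le_rfl, by omega, h, fun k hk1 hk2 => absurd hk1 (by omega)⟩
      · rintro ⟨m, hm1, hm2, hm3, _⟩
        have : m = j := by omega
        rwa [this] at hm3
    | succ i ih =>
      intro j
      have he : 2 ^ (i + 1) = 2 ^ i + 2 ^ i := by rw [pow_succ]; ring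
      rw [hstep2, Bool.or_eq_true, Bool.and_eq_true, ih, ih, hA]
      constructor
      · rintro (⟨m, hm1, hm2, hm3, hm4⟩ | ⟨h1, m, hm1, hm2, hm3, hm4⟩)
        · exact ⟨m, hm1, by omega, hm3, hm4⟩
        · refine ⟨m, by omega, by omega, hm3, fun k hk1 hk2 => ?_⟩
          by_cases hc : k < j + 2 ^ i
          · exact h1 k hk1 hc
          · exact hm4 k (by omega) hk2
      · rintro ⟨m, hm1, hm2, hm3, hm4⟩
        by_cases hc : m < j + 2 ^ i
        · exact Or.inl ⟨m, hm1, hc, hm3, hm4⟩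
        · refine Or.inr ⟨fun k hk1 hk2 => hm4 k hk1 (by omega),
            m, by omega, by omega, hm3, fun k hk1 hk2 => hm4 k (by omega) hk2⟩
  intro i hi j
  rw [hB i j]
  show _ ↔ ∃ m, j ≤ m ∧ m < tr.length ∧ Sat tr φ₂ m ∧ ∀ k, j ≤ k → k < m → Sat tr φ₁ k
  constructor
  · rintro ⟨m, hm1, hm2, hm3, hm4⟩
    exact ⟨m, hm1, sat_lt tr φ₂ m hm3, hm3, hm4⟩
  · rintro ⟨m, hm1, hm2, hm3, hm4⟩
    exact ⟨m, hm1, by omega, hm3, hm4⟩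
end

section
/- Redundancy elimination in divide-and-conquer recombination: let (P, N) be a specification with P = P₁ ∪ P₂ and N = N₁ ∪ N₂, for i, j ∈ {1, 2} let φ_ij be an LTL formula separating (P_i, N_j), and suppose φ₁₁ implies φ₁₂ (i.e., L(φ₁₁) ⊆ L(φ₁₂)). Then φ₁₁ ∨ (φ₂₁ ∧ φ₂₂) separates (P, N), and its uniform cost is strictly smaller than the uniform cost of (φ₁₁ ∧ φ₁₂) ∨ (φ₂₁ ∧ φ₂₂). -/
/-- `φ` separates the specification `(P, N)`: all traces in `P` are accepted
and all traces in `N` are rejected. -/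
def Separates {α : Type} (φ : LTL α) (P N : Set (List (Set α))) : Prop :=
  (∀ tr ∈ P, Sat tr φ 0) ∧ (∀ tr ∈ N, ¬ Sat tr φ 0)

/-- Uniform cost of an LTL formula: every connective and atomic proposition
costs 1. -/
def cost {α : Type} : LTL α → ℕ
  | .atom _ => 1
  | .neg φ => 1 + cost φ
  | .next φ => 1 + cost φ
  | .ev φ => 1 + cost φ
  | .alw φ => 1 + cost φ
  | .conj φ ψ => 1 + cost φ + cost ψ
  | .disj φ ψ => 1 + cost φ + cost ψ
  | .untl φ ψ => 1 + cost φ + cost ψ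

/-- The language of `φ`: the set of traces satisfying `φ` at position 0. -/
def Lang {α : Type} (φ : LTL α) : Set (List (Set α)) := {tr | Sat tr φ 0}

lemma Sat_lt {α : Type} (tr : List (Set α)) (φ : LTL α) (i : ℕ)
    (h : Sat tr φ i) : i < tr.length := by
  induction φ generalizing i with
  | atom p => exact h.1
  | neg φ ih => exact h.1
  | conj φ ψ ih1 ih2 => exact ih1 _ h.1
  | disj φ ψ ih1 ih2 => exact h.1
  | next φ ih => exact Nat.lt_of_succ_lt (ih _ h)
  | ev φ ih => obtain ⟨j, hij, hj, _⟩ := h; omega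
  | alw φ ih => exact h.1
  | untl φ ψ ih1 ih2 => obtain ⟨j, hij, hj, _⟩ := h; omega

lemma cost_pos {α : Type} (φ : LTL α) : 1 ≤ cost φ := by
  cases φ <;> simp [cost] <;> omega

/-- Redundancy elimination in divide-and-conquer recombination: if moreover
`L(φ₁₁) ⊆ L(φ₁₂)`, then `φ₁₁ ∨ (φ₂₁ ∧ φ₂₂)` separates `(P, N)` and has
strictly smaller uniform cost than `(φ₁₁ ∧ φ₁₂) ∨ (φ₂₁ ∧ φ₂₂)`. -/
theorem stmt_18 {α : Type} [Fintype α] [Nonempty α]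
    (P N P₁ P₂ N₁ N₂ : Set (List (Set α)))
    (hPfin : P.Finite) (hNfin : N.Finite)
    (hdisj : P ∩ N = ∅)
    (hP : P = P₁ ∪ P₂) (hN : N = N₁ ∪ N₂)
    (φ₁₁ φ₁₂ φ₂₁ φ₂₂ : LTL α)
    (h11 : Separates φ₁₁ P₁ N₁) (h12 : Separates φ₁₂ P₁ N₂)
    (h21 : Separates φ₂₁ P₂ N₁) (h22 : Separates φ₂₂ P₂ N₂)
    (himp : Lang φ₁₁ ⊆ Lang φ₁₂) :
    Separates (LTL.disj φ₁₁ (LTL.conj φ₂₁ φ₂₂)) P N ∧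
      cost (LTL.disj φ₁₁ (LTL.conj φ₂₁ φ₂₂)) <
        cost (LTL.disj (LTL.conj φ₁₁ φ₁₂) (LTL.conj φ₂₁ φ₂₂)) := by
  constructor
  · constructor
    · intro tr htr
      rw [hP] at htr
      cases htr with
      | inl h =>
        have h1 := h11.1 tr h
        exact ⟨Sat_lt tr φ₁₁ 0 h1, Or.inl h1⟩
      | inr h =>
        have h1 := h21.1 tr h
        have h2 := h22.1 tr h
        exact ⟨Sat_lt tr φ₂₁ 0 h1, Or.inr ⟨h1, h2⟩⟩
    · intro tr htr hs
      obtain ⟨_, hs⟩ := hs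
      rw [hN] at htr
      cases htr with
      | inl h =>
        cases hs with
        | inl hs => exact h11.2 tr h hs
        | inr hs => exact h21.2 tr h hs.1
      | inr h =>
        cases hs with
        | inl hs => exact h12.2 tr h (himp hs)
        | inr hs => exact h22.2 tr h hs.2
  · have := cost_pos φ₁₂
    simp [cost]
    omega
end
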